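/- Let Γ be the self-anonymous two-action game with n ≥ 1 players and payoffs p_1,…,p_n : {0,…,n} → ℝ, and let X_Γ ∈ ℝ^{(n+1)×n} be the matrix with entries x_{i,j} = p_j(i−1). Then for every player j ∈ [n] and action a ∈ {0,1}: action a of player j is stepwise eliminable in Γ if and only if there exists an elimination sequence (c,r) for X_Γ and an index i with c_i = j and r_i = a. -/
import Mathlib


/-- An action profile `b` respects the restrictions of the subgame `(S₀, S₁)`:
players in `S₀` play action `0` (`false`) and players in `S₁` play action `1` (`true`). -/
def Respects (S₀ S₁ : Finset ℕ) (b : ℕ → Bool) : Prop :=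
  (∀ i ∈ S₀, b i = false) ∧ (∀ i ∈ S₁, b i = true)

/-- The number of players other than `j` (among players `1,…,n`) playing action `1`
in profile `b`. -/
def othersCount (n j : ℕ) (b : ℕ → Bool) : ℕ :=
  (((Finset.Icc 1 n).erase j).filter fun i => b i = true).card

/-- In the self-anonymous two-action game with `n` players and payoffs `p j t` (payoff of
player `j` when `t` players in total play action `1`), action `a` of player `j` is weakly
dominated by action `1 - a` in the subgame `(S₀, S₁)`: against every profile of the other
players respecting the restrictions, playing `1 - a` is at least as good as playing `a`,
and strictly better against at least one such profile. -/
def DominatedBy (n : ℕ) (p : ℕ → ℕ → ℝ) (S₀ S₁ : Finset ℕ) (j : ℕ) (a : Bool) : Prop :=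
  (∀ b : ℕ → Bool, Respects S₀ S₁ b →
     p j (othersCount n j b + (if a then 1 else 0)) ≤
       p j (othersCount n j b + (if a then 0 else 1))) ∧
  (∃ b : ℕ → Bool, Respects S₀ S₁ b ∧
     p j (othersCount n j b + (if a then 1 else 0)) <
       p j (othersCount n j b + (if a then 0 else 1)))

/-- Column `k` of the real matrix `X` (with `m` rows, 1-indexed) is increasing in the
interval `[i,j] ⊆ [m]`. -/
def ColIncrR (m : ℕ) (X : ℕ → ℕ → ℝ) (k i j : ℕ) : Prop :=
  1 ≤ i ∧ i ≤ j ∧ j ≤ m ∧ (∀ a, i ≤ a → a < j → X a k ≤ X (a + 1) k) ∧ X i k < X j k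

/-- Column `k` of the real matrix `X` is decreasing in the interval `[i,j] ⊆ [m]`. -/
def ColDecrR (m : ℕ) (X : ℕ → ℕ → ℝ) (k i j : ℕ) : Prop :=
  1 ≤ i ∧ i ≤ j ∧ j ≤ m ∧ (∀ a, i ≤ a → a < j → X (a + 1) k ≤ X a k) ∧ X j k < X i k

/-- Number of `0`s (i.e. `false`) among `r₁,…,r_{i-1}`. -/
def zerosBefore {kk : ℕ} (r : Fin kk → Bool) (i : Fin kk) : ℕ :=
  (Finset.univ.filter fun t : Fin kk => t < i ∧ r t = false).card

/-- Number of `1`s (i.e. `true`) among `r₁,…,r_{i-1}`. -/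
def onesBefore {kk : ℕ} (r : Fin kk → Bool) (i : Fin kk) : ℕ :=
  (Finset.univ.filter fun t : Fin kk => t < i ∧ r t = true).card

/-- `(c, r)` is an elimination sequence for the real matrix `X ∈ ℝ^{m×n}`. -/
def IsElimSeqR (m n : ℕ) (X : ℕ → ℕ → ℝ) {kk : ℕ} (c : Fin kk → ℕ) (r : Fin kk → Bool) : Prop :=
  (∀ i, c i ∈ Finset.Icc 1 n) ∧ Function.Injective c ∧
  ∀ i : Fin kk,
    (r i = false → ColIncrR m X (c i) (zerosBefore r i + 1) (m - onesBefore r i)) ∧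
    (r i = true → ColDecrR m X (c i) (zerosBefore r i + 1) (m - onesBefore r i))

/-- Players restricted to action `0`: those eliminated earlier with eliminated action `1`. -/
def restrictedToZero {kk : ℕ} (j : Fin kk → ℕ) (a : Fin kk → Bool) (t : Fin kk) : Finset ℕ :=
  (Finset.univ.filter fun s : Fin kk => s < t ∧ a s = true).image j

/-- Players restricted to action `1`: those eliminated earlier with eliminated action `0`. -/
def restrictedToOne {kk : ℕ} (j : Fin kk → ℕ) (a : Fin kk → Bool) (t : Fin kk) : Finset ℕ :=
  (Finset.univ.filter fun s : Fin kk => s < t ∧ a s = false).image j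

/-- `(j, a)` is a stepwise elimination sequence of the self-anonymous two-action game with
`n` players and payoffs `p`: the players `j t ∈ [n]` are pairwise distinct, and at each
step `t`, action `a t` of player `j t` is weakly dominated by action `1 - a t` in the
subgame in which each earlier player `j s` is restricted to action `1 - a s`. -/
def IsStepwiseElim (n : ℕ) (p : ℕ → ℕ → ℝ) {kk : ℕ} (j : Fin kk → ℕ) (a : Fin kk → Bool) : Prop :=
  (∀ t, j t ∈ Finset.Icc 1 n) ∧ Function.Injective j ∧
  ∀ t, DominatedBy n p (restrictedToZero j a t) (restrictedToOne j a t) (j t) (a t)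

lemma chain_le (f : ℕ → ℝ) (i j : ℕ) (hij : i ≤ j)
    (h : ∀ m, i ≤ m → m < j → f m ≤ f (m + 1)) : f i ≤ f j := by
  induction j, hij using Nat.le_induction with
  | base => exact le_refl _
  | succ k hk ih =>
    exact le_trans (ih (fun m hm hmk => h m hm (by omega))) (h k hk (by omega))

lemma chain_ge (f : ℕ → ℝ) (i j : ℕ) (hij : i ≤ j)
    (h : ∀ m, i ≤ m → m < j → f (m + 1) ≤ f m) : f j ≤ f i := by
  have := chain_le (fun m => -(f m)) i j hij (fun m hm hmk => by
    simpa using h m hm hmk)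
  simpa using this

lemma chain_strict (f : ℕ → ℝ) (i j : ℕ) (hij : i ≤ j)
    (h : ∀ m, i ≤ m → m < j → f m ≤ f (m + 1)) (hs : f i < f j) :
    ∃ m, i ≤ m ∧ m < j ∧ f m < f (m + 1) := by
  by_contra h'
  push_neg at h'
  exact absurd (chain_ge f i j hij fun m hm hmk => h' m hm hmk) (not_le.mpr hs)

lemma chain_strict_ge (f : ℕ → ℝ) (i j : ℕ) (hij : i ≤ j)
    (h : ∀ m, i ≤ m → m < j → f (m + 1) ≤ f m) (hs : f j < f i) :
    ∃ m, i ≤ m ∧ m < j ∧ f (m + 1) < f m := by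
  by_contra h'
  push_neg at h'
  exact absurd (chain_le f i j hij fun m hm hmk => h' m hm hmk) (not_le.mpr hs)

lemma othersCount_bounds (n : ℕ) (jt : ℕ) (S₀ S₁ : Finset ℕ)
    (hsub : S₀ ∪ S₁ ⊆ (Finset.Icc 1 n).erase jt) (hjt : jt ∈ Finset.Icc 1 n)
    (b : ℕ → Bool) (hb : Respects S₀ S₁ b) :
    S₁.card ≤ othersCount n jt b ∧ othersCount n jt b + S₀.card + 1 ≤ n := by
  set E := (Finset.Icc 1 n).erase jt with hE
  have hEcard : E.card = n - 1 := by
    rw [hE, Finset.card_erase_of_mem hjt, Nat.card_Icc]; omega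
  have hn1 : 1 ≤ n := by
    simp only [Finset.mem_Icc] at hjt; omega
  have h1 : S₁ ⊆ E.filter fun i => b i = true := by
    intro i hi
    exact Finset.mem_filter.mpr ⟨hsub (Finset.mem_union_right _ hi), hb.2 i hi⟩
  have h2 : E.filter (fun i => b i = true) ⊆ E \ S₀ := by
    intro i hi
    rw [Finset.mem_filter] at hi
    refine Finset.mem_sdiff.mpr ⟨hi.1, fun hi0 => ?_⟩
    rw [hb.1 i hi0] at hi
    exact absurd hi.2 (by simp)
  have hS₀E : S₀ ⊆ E := fun i hi => hsub (Finset.mem_union_left _ hi)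
  have hc2 := Finset.card_le_card h2
  rw [Finset.card_sdiff_of_subset hS₀E, hEcard] at hc2
  have hS₀c : S₀.card ≤ n - 1 := hEcard ▸ Finset.card_le_card hS₀E
  exact ⟨Finset.card_le_card h1, by unfold othersCount; rw [← hE]; omega⟩

lemma exists_profile (n : ℕ) (jt : ℕ) (S₀ S₁ : Finset ℕ)
    (hsub : S₀ ∪ S₁ ⊆ (Finset.Icc 1 n).erase jt) (hdisj : Disjoint S₀ S₁)
    (hjt : jt ∈ Finset.Icc 1 n) (m : ℕ)
    (h1 : S₁.card ≤ m) (h2 : m + S₀.card + 1 ≤ n) :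
    ∃ b, Respects S₀ S₁ b ∧ othersCount n jt b = m := by
  set E := (Finset.Icc 1 n).erase jt with hE
  have hEcard : E.card = n - 1 := by
    rw [hE, Finset.card_erase_of_mem hjt, Nat.card_Icc]; omega
  set F := E \ (S₀ ∪ S₁) with hF
  have hFcard : F.card = n - 1 - (S₀.card + S₁.card) := by
    rw [hF, Finset.card_sdiff_of_subset hsub, hEcard, Finset.card_union_of_disjoint hdisj]
  obtain ⟨T, hTF, hTcard⟩ := Finset.exists_subset_card_eq (s := F) (n := m - S₁.card) (by omega)
  refine ⟨fun i => decide (i ∈ S₁ ∪ T), ⟨fun i hi => ?_, fun i hi => ?_⟩, ?_⟩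
  · simp only [decide_eq_false_iff_not, Finset.mem_union, not_or]
    constructor
    · exact fun h => (Finset.disjoint_left.mp hdisj hi) h
    · intro hT
      have := hTF hT
      rw [hF, Finset.mem_sdiff] at this
      exact this.2 (Finset.mem_union_left _ hi)
  · simp [hi]
  · have hfe : E.filter (fun i => decide (i ∈ S₁ ∪ T) = true) = S₁ ∪ T := by
      apply Finset.Subset.antisymm
      · intro i hi
        rw [Finset.mem_filter] at hi
        simpa using hi.2
      · intro i hi
        refine Finset.mem_filter.mpr ⟨?_, by simpa using hi⟩
        rcases Finset.mem_union.mp hi with h | h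
        · exact hsub (Finset.mem_union_right _ h)
        · have := hTF h; rw [hF, Finset.mem_sdiff] at this; exact this.1
    have hdisjT : Disjoint S₁ T := by
      refine Finset.disjoint_left.mpr fun i hi hT => ?_
      have := hTF hT
      rw [hF, Finset.mem_sdiff] at this
      exact this.2 (Finset.mem_union_right _ hi)
    unfold othersCount
    rw [← hE, hfe, Finset.card_union_of_disjoint hdisjT, hTcard]
    omega

lemma dominatedBy_iff (n : ℕ) (p : ℕ → ℕ → ℝ) (jt : ℕ) (S₀ S₁ : Finset ℕ)
    (hsub : S₀ ∪ S₁ ⊆ (Finset.Icc 1 n).erase jt) (hdisj : Disjoint S₀ S₁)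
    (hjt : jt ∈ Finset.Icc 1 n) (a : Bool) :
    DominatedBy n p S₀ S₁ jt a ↔
      ((∀ m, S₁.card ≤ m → m + S₀.card + 1 ≤ n →
          p jt (m + (if a then 1 else 0)) ≤ p jt (m + (if a then 0 else 1))) ∧
       (∃ m, S₁.card ≤ m ∧ m + S₀.card + 1 ≤ n ∧
          p jt (m + (if a then 1 else 0)) < p jt (m + (if a then 0 else 1)))) := by
  constructor
  · rintro ⟨hall, b, hb, hlt⟩
    constructor
    · intro m hm1 hm2
      obtain ⟨b', hb', hoc⟩ := exists_profile n jt S₀ S₁ hsub hdisj hjt m hm1 hm2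
      have := hall b' hb'
      rwa [hoc] at this
    · obtain ⟨h1, h2⟩ := othersCount_bounds n jt S₀ S₁ hsub hjt b hb
      exact ⟨othersCount n jt b, h1, h2, hlt⟩
  · rintro ⟨hall, m, hm1, hm2, hlt⟩
    constructor
    · intro b hb
      obtain ⟨h1, h2⟩ := othersCount_bounds n jt S₀ S₁ hsub hjt b hb
      exact hall _ h1 h2
    · obtain ⟨b, hb, hoc⟩ := exists_profile n jt S₀ S₁ hsub hdisj hjt m hm1 hm2
      exact ⟨b, hb, by rw [hoc]; exact hlt⟩

lemma colIncrR_iff (n : ℕ) (p : ℕ → ℕ → ℝ) (k z o : ℕ) (hzo : z + o + 1 ≤ n) :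
    ColIncrR (n + 1) (fun i j => p j (i - 1)) k (z + 1) (n + 1 - o) ↔
      ((∀ m, z ≤ m → m + o + 1 ≤ n → p k m ≤ p k (m + 1)) ∧
       ∃ m, z ≤ m ∧ m + o + 1 ≤ n ∧ p k m < p k (m + 1)) := by
  unfold ColIncrR
  simp only []
  have e1 : z + 1 - 1 = z := by omega
  have e2 : n + 1 - o - 1 = n - o := by omega
  constructor
  · rintro ⟨-, -, -, hstep, hend⟩
    have hmono : ∀ m, z ≤ m → m + o + 1 ≤ n → p k m ≤ p k (m + 1) := by
      intro m hm1 hm2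
      have := hstep (m + 1) (by omega) (by omega)
      simpa using this
    refine ⟨hmono, ?_⟩
    rw [e1, e2] at hend
    obtain ⟨m, hm1, hm2, hm3⟩ := chain_strict (fun m => p k m) z (n - o) (by omega)
      (fun m h1 h2 => hmono m h1 (by omega)) hend
    exact ⟨m, hm1, by omega, hm3⟩
  · rintro ⟨hmono, m, hm1, hm2, hm3⟩
    refine ⟨by omega, by omega, by omega, ?_, ?_⟩
    · intro aa h1 h2
      have := hmono (aa - 1) (by omega) (by omega)
      have e3 : aa - 1 + 1 = aa := by omega
      rw [e3] at this
      simpa [e3] using this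
    · rw [e1, e2]
      calc p k z ≤ p k m := chain_le (fun m => p k m) z m hm1
                    (fun m' h1 h2 => hmono m' h1 (by omega))
        _ < p k (m + 1) := hm3
        _ ≤ p k (n - o) := chain_le (fun m => p k m) (m + 1) (n - o) (by omega)
                    (fun m' h1 h2 => hmono m' (by omega) (by omega))

lemma colDecrR_iff (n : ℕ) (p : ℕ → ℕ → ℝ) (k z o : ℕ) (hzo : z + o + 1 ≤ n) :
    ColDecrR (n + 1) (fun i j => p j (i - 1)) k (z + 1) (n + 1 - o) ↔
      ((∀ m, z ≤ m → m + o + 1 ≤ n → p k (m + 1) ≤ p k m) ∧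
       ∃ m, z ≤ m ∧ m + o + 1 ≤ n ∧ p k (m + 1) < p k m) := by
  unfold ColDecrR
  simp only []
  have e1 : z + 1 - 1 = z := by omega
  have e2 : n + 1 - o - 1 = n - o := by omega
  constructor
  · rintro ⟨-, -, -, hstep, hend⟩
    have hmono : ∀ m, z ≤ m → m + o + 1 ≤ n → p k (m + 1) ≤ p k m := by
      intro m hm1 hm2
      have := hstep (m + 1) (by omega) (by omega)
      simpa using this
    refine ⟨hmono, ?_⟩
    rw [e1, e2] at hend
    obtain ⟨m, hm1, hm2, hm3⟩ := chain_strict_ge (fun m => p k m) z (n - o) (by omega)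
      (fun m h1 h2 => hmono m h1 (by omega)) hend
    exact ⟨m, hm1, by omega, hm3⟩
  · rintro ⟨hmono, m, hm1, hm2, hm3⟩
    refine ⟨by omega, by omega, by omega, ?_, ?_⟩
    · intro aa h1 h2
      have := hmono (aa - 1) (by omega) (by omega)
      have e3 : aa - 1 + 1 = aa := by omega
      rw [e3] at this
      simpa [e3] using this
    · rw [e1, e2]
      calc p k (n - o) ≤ p k (m + 1) := chain_ge (fun m => p k m) (m + 1) (n - o) (by omega)
                    (fun m' h1 h2 => hmono m' (by omega) (by omega))
        _ < p k m := hm3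
        _ ≤ p k z := chain_ge (fun m => p k m) z m hm1
                    (fun m' h1 h2 => hmono m' h1 (by omega))

section StepFacts

variable {kk n : ℕ} (j : Fin kk → ℕ) (a : Fin kk → Bool)
  (hj : ∀ t, j t ∈ Finset.Icc 1 n) (hinj : Function.Injective j) (t : Fin kk)

include hinj in

lemma card_restrictedToOne : (restrictedToOne j a t).card = zerosBefore a t :=
  Finset.card_image_of_injOn hinj.injOn

include hinj in

lemma card_restrictedToZero : (restrictedToZero j a t).card = onesBefore a t :=
  Finset.card_image_of_injOn hinj.injOn

include hj hinj in

lemma restricted_subset :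
    restrictedToZero j a t ∪ restrictedToOne j a t ⊆ (Finset.Icc 1 n).erase (j t) := by
  intro i hi
  rcases Finset.mem_union.mp hi with h | h <;>
  · obtain ⟨s, hs, rfl⟩ := Finset.mem_image.mp h
    rw [Finset.mem_filter] at hs
    refine Finset.mem_erase.mpr ⟨fun he => ?_, hj s⟩
    exact absurd (hinj he) (Fin.ne_of_lt hs.2.1)

include hinj in

lemma restricted_disjoint : Disjoint (restrictedToZero j a t) (restrictedToOne j a t) := by
  refine Finset.disjoint_left.mpr fun i h0 h1 => ?_
  obtain ⟨s, hs, rfl⟩ := Finset.mem_image.mp h0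
  obtain ⟨s', hs', he⟩ := Finset.mem_image.mp h1
  rw [Finset.mem_filter] at hs hs'
  have h1' := hs'.2.2
  rw [hinj he, hs.2.2] at h1'
  exact Bool.noConfusion h1'

include hj hinj in

lemma zo_bound : zerosBefore a t + onesBefore a t + 1 ≤ n := by
  classical
  have hsplit : zerosBefore a t + onesBefore a t
      = (Finset.univ.filter fun s : Fin kk => s < t).card := by
    unfold zerosBefore onesBefore
    rw [← Finset.filter_filter, ← Finset.filter_filter]
    have hfc : ((Finset.univ.filter fun s : Fin kk => s < t).filter fun s => a s = true)
        = (Finset.univ.filter fun s : Fin kk => s < t).filter fun s => ¬ a s = false := by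
      apply Finset.filter_congr
      intro x _
      simp
    rw [hfc, Finset.card_filter_add_card_filter_not]
  have htnot : t ∉ Finset.univ.filter fun s : Fin kk => s < t := by simp
  have hins : (insert t (Finset.univ.filter fun s : Fin kk => s < t)).card
      = zerosBefore a t + onesBefore a t + 1 := by
    rw [Finset.card_insert_of_notMem htnot, hsplit]
  have himg : ((insert t (Finset.univ.filter fun s : Fin kk => s < t)).image j).card
      = zerosBefore a t + onesBefore a t + 1 := by
    rw [Finset.card_image_of_injOn hinj.injOn, hins]
  have hsub2 : (insert t (Finset.univ.filter fun s : Fin kk => s < t)).image j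
      ⊆ Finset.Icc 1 n := by
    intro i hi
    obtain ⟨s, _, rfl⟩ := Finset.mem_image.mp hi
    exact hj s
  have := Finset.card_le_card hsub2
  rw [himg, Nat.card_Icc] at this
  omega

end StepFacts

lemma step_iff {kk : ℕ} (n : ℕ) (p : ℕ → ℕ → ℝ) (j : Fin kk → ℕ) (a : Fin kk → Bool)
    (hj : ∀ t, j t ∈ Finset.Icc 1 n) (hinj : Function.Injective j) (t : Fin kk) :
    DominatedBy n p (restrictedToZero j a t) (restrictedToOne j a t) (j t) (a t) ↔
      ((a t = false → ColIncrR (n + 1) (fun i j' => p j' (i - 1)) (j t)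
          (zerosBefore a t + 1) (n + 1 - onesBefore a t)) ∧
       (a t = true → ColDecrR (n + 1) (fun i j' => p j' (i - 1)) (j t)
          (zerosBefore a t + 1) (n + 1 - onesBefore a t))) := by
  have hzo := zo_bound j a hj hinj t
  rw [dominatedBy_iff n p (j t) _ _ (restricted_subset j a hj hinj t)
    (restricted_disjoint j a hinj t) (hj t) (a t),
    card_restrictedToOne j a hinj t, card_restrictedToZero j a hinj t]
  cases ha : a t with
  | false =>
    rw [colIncrR_iff n p (j t) _ _ hzo]
    simp
  | true =>
    rw [colDecrR_iff n p (j t) _ _ hzo]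
    simp

/-- Action `a₀` of player `j₀` is stepwise eliminable in the self-anonymous two-action
game with `n ≥ 1` players and payoffs `p` iff there is an elimination sequence `(c, r)`
for the `(n+1) × n` matrix `X_Γ` (with entries `x_{i,j} = p j (i-1)`) and an index `i`
with `c i = j₀` and `r i = a₀`. -/
theorem stepwise_eliminable_iff_column_eliminable
    (n : ℕ) (hn : 1 ≤ n) (p : ℕ → ℕ → ℝ)
    (j₀ : ℕ) (hj₀ : j₀ ∈ Finset.Icc 1 n) (a₀ : Bool) :
    (∃ (kk : ℕ) (j : Fin kk → ℕ) (a : Fin kk → Bool),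
        IsStepwiseElim n p j a ∧ ∃ t, j t = j₀ ∧ a t = a₀) ↔
      (∃ (kk : ℕ) (c : Fin kk → ℕ) (r : Fin kk → Bool),
        IsElimSeqR (n + 1) n (fun i j => p j (i - 1)) c r ∧ ∃ i, c i = j₀ ∧ r i = a₀) := by
  constructor
  · rintro ⟨kk, j, a, ⟨hj, hinj, hdom⟩, t, ht1, ht2⟩
    exact ⟨kk, j, a, ⟨hj, hinj, fun i =>
      ((step_iff n p j a hj hinj i).mp (hdom i))⟩, t, ht1, ht2⟩
  · rintro ⟨kk, c, r, ⟨hc, hinj, hcol⟩, i, hi1, hi2⟩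
    exact ⟨kk, c, r, ⟨hc, hinj, fun t =>
      ((step_iff n p c r hc hinj t).mpr (hcol t))⟩, i, hi1, hi2⟩
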